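/- In the dcpo L, if D is a directed subset whose supremum lies in Σ, then D ∩ Σ is directed, cofinal in D, and ⋁(D ∩ Σ) = ⋁D. -/

import Mathlib

/-- Nonempty finite sequences of positive naturals. -/
abbrev FinSeq := {l : List ℕ+ // l ≠ []}

/-- `Sig` : nonempty finite or countably infinite sequences of positive naturals. -/
abbrev Sig := FinSeq ⊕ (ℕ → ℕ+)

/-- The substring (prefix) order on `Sig`. -/
def sigLE : Sig → Sig → Prop
  | Sum.inl a, Sum.inl b => a.val <+: b.val
  | Sum.inl a, Sum.inr f => ∀ i : Fin a.val.length, a.val.get i = f i.val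
  | Sum.inr f, Sum.inr g => f = g
  | Sum.inr _, Sum.inl _ => False

/-- A subset `D` is directed w.r.t. relation `r`. -/
def DirectedSet {A : Type _} (r : A → A → Prop) (D : Set A) : Prop :=
  D.Nonempty ∧ ∀ a ∈ D, ∀ b ∈ D, ∃ c ∈ D, r a c ∧ r b c

/-- `s` is the supremum (least upper bound) of `D` w.r.t. `r`. -/
def IsSupOf {A : Type _} (r : A → A → Prop) (D : Set A) (s : A) : Prop :=
  (∀ a ∈ D, r a s) ∧ ∀ u, (∀ a ∈ D, r a u) → r s u

/-- `c` is a compact element w.r.t. `r`. -/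
def IsCompactEl {A : Type _} (r : A → A → Prop) (c : A) : Prop :=
  ∀ D s, DirectedSet r D → IsSupOf r D s → r c s → ∃ d ∈ D, r c d

/-- `x` is maximal w.r.t. `r`. -/
def IsMaximalEl {A : Type _} (r : A → A → Prop) (x : A) : Prop :=
  ∀ y, r x y → y = x

/-- `U` is Scott open w.r.t. `r`. -/
def ScottOpen {A : Type _} (r : A → A → Prop) (U : Set A) : Prop :=
  (∀ x ∈ U, ∀ y, r x y → y ∈ U) ∧
  ∀ D s, DirectedSet r D → IsSupOf r D s → s ∈ U → ∃ d ∈ D, d ∈ U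

/-- The poset `X`: pairs `x_{m,n}` with `m ∈ ℕ₊`, `n ∈ ℕ₊ ∪ {ω}` (`ω = ⊤`). -/
abbrev XP := ℕ+ × WithTop ℕ+

/-- Order on `X`: `x_{m₁,n₁} ≤ x_{m₂,n₂}` iff `m₁ = m₂` and `n₁ ≤ n₂`. -/
def xLE : XP → XP → Prop := fun a b => a.1 = b.1 ∧ a.2 ≤ b.2

/-- The carrier of `L = X ∪ Σ ∪ Σ*`. -/
abbrev LP := XP ⊕ (Sig ⊕ Sig)

def toX (p : XP) : LP := Sum.inl p
/-- The copy `Σ` inside `L`. -/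
def toS (a : Sig) : LP := Sum.inr (Sum.inl a)
/-- The copy `Σ*` inside `L`. -/
def toS' (a : Sig) : LP := Sum.inr (Sum.inr a)

/-- Underlying sequence of an element of `Σ ∪ Σ*`. -/
def sigOf : Sig ⊕ Sig → Sig := Sum.elim id id

/-- `entryGE v k m` : the length of `v` is `≥ k+1` and its `(k+1)`-th entry is `≥ m`
(0-based index `k`). -/
def entryGE : Sig → ℕ → ℕ+ → Prop
  | Sum.inl l, k, m => ∃ h : k < l.val.length, m ≤ l.val.get ⟨k, h⟩
  | Sum.inr f, k, m => m ≤ f k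

/-- The order on `L`. -/
def lLE : LP → LP → Prop
  | Sum.inl x, Sum.inl y => xLE x y
  | Sum.inl x, Sum.inr w =>
      ∃ m : ℕ+, x.2 = (m : WithTop ℕ+) ∧ entryGE (sigOf w) x.1.natPred m
  | Sum.inr (Sum.inl a), Sum.inr w => sigLE a (sigOf w)
  | Sum.inr (Sum.inr a), Sum.inr (Sum.inr b) => sigLE a b
  | Sum.inr (Sum.inr _), Sum.inr (Sum.inl _) => False
  | Sum.inr _, Sum.inl _ => False


/- Below a point of `Σ` there are only points of `X ∪ Σ`, and above a point of `Σ` only points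
of `Σ ∪ Σ*`; hence, in a directed set `D` with supremum in `Σ`, every upper bound in `D` of a point
of `D ∩ Σ` lies in `Σ`, which makes `D ∩ Σ` directed and cofinal as soon as it is nonempty. It is
nonempty because a directed subset of `X` lies in a single chain `{x_{m,n}}`, which is bounded
by `x_{m,ω}`, and no point of `Σ` lies below a point of `X`. -/

section Cofinal

variable {A : Type*} {r : A → A → Prop} {D S : Set A}

lemma DirectedSet.cofinal_inter (hD : DirectedSet r D)
    (hup : ∀ a ∈ D ∩ S, ∀ c ∈ D, r a c → c ∈ S) (hne : (D ∩ S).Nonempty) :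
    ∀ d ∈ D, ∃ e ∈ D ∩ S, r d e := by
  intro d hd
  obtain ⟨a, ha⟩ := hne
  obtain ⟨c, hc, hdc, hac⟩ := hD.2 d hd a ha.1
  exact ⟨c, ⟨hc, hup a ha c hc hac⟩, hdc⟩

lemma DirectedSet.inter (hD : DirectedSet r D)
    (hup : ∀ a ∈ D ∩ S, ∀ c ∈ D, r a c → c ∈ S) (hne : (D ∩ S).Nonempty) :
    DirectedSet r (D ∩ S) := by
  refine ⟨hne, fun a ha b hb => ?_⟩
  obtain ⟨c, hc, hac, hbc⟩ := hD.2 a ha.1 b hb.1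
  exact ⟨c, ⟨hc, hup a ha c hc hac⟩, hac, hbc⟩

lemma IsSupOf.of_cofinal [IsTrans A r] {E : Set A} {s : A} (hs : IsSupOf r D s) (hED : E ⊆ D)
    (hcof : ∀ d ∈ D, ∃ e ∈ E, r d e) : IsSupOf r E s := by
  refine ⟨fun e he => hs.1 e (hED he), fun u hu => hs.2 u fun d hd => ?_⟩
  obtain ⟨e, he, hde⟩ := hcof d hd
  exact _root_.trans hde (hu e he)

end Cofinal

lemma sigLE_trans {a b c : Sig} (h1 : sigLE a b) (h2 : sigLE b c) : sigLE a c := by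
  rcases a with l | f <;> rcases b with l' | g
  · rcases c with l'' | f
    · exact h1.trans h2
    · intro i
      have h3 := h2 ⟨i, lt_of_lt_of_le i.2 h1.length_le⟩
      simp only [List.get_eq_getElem] at h3 ⊢
      rwa [h1.getElem i.2]
  · rcases c with _ | h
    · exact h2.elim
    · obtain rfl : g = h := h2
      exact h1
  · exact h1.elim
  · obtain rfl : f = g := h1
    exact h2

lemma entryGE_mono {b w : Sig} {k : ℕ} {m : ℕ+} (h : sigLE b w) (he : entryGE b k m) :
    entryGE w k m := by
  rcases b with l | f <;> rcases w with l' | g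
  · obtain ⟨hk, hm⟩ := he
    refine ⟨lt_of_lt_of_le hk h.length_le, ?_⟩
    simp only [List.get_eq_getElem] at hm ⊢
    rwa [← h.getElem hk]
  · obtain ⟨hk, hm⟩ := he
    have h3 := h ⟨k, hk⟩
    simp only [List.get_eq_getElem] at h3 hm
    exact hm.trans_eq h3
  · exact h.elim
  · obtain rfl : f = g := h
    exact he

lemma entryGE_anti {v : Sig} {k : ℕ} {m m' : ℕ+} (hm : m' ≤ m) (h : entryGE v k m) :
    entryGE v k m' := by
  cases v with
  | inl l =>
    obtain ⟨hk, h⟩ := h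
    exact ⟨hk, hm.trans h⟩
  | inr f => exact hm.trans h

lemma lLE_trans {a b c : LP} (hab : lLE a b) (hbc : lLE b c) : lLE a c := by
  rcases b with y | b | b
  · rcases a with x | a
    · have hxy : xLE x y := hab
      rcases c with z | w
      · have hyz : xLE y z := hbc
        exact ⟨hxy.1.trans hyz.1, hxy.2.trans hyz.2⟩
      · obtain ⟨m, hm, he⟩ := hbc
        obtain ⟨m', hm', hle⟩ := WithTop.le_coe_iff.1 (hm ▸ hxy.2)
        exact ⟨m', hm', hxy.1 ▸ entryGE_anti hle he⟩
    · rcases a with a | a <;> exact hab.elim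
  · rcases c with z | w
    · exact hbc.elim
    · rcases a with x | a | a
      · obtain ⟨m, hm, he⟩ := hab
        exact ⟨m, hm, entryGE_mono hbc he⟩
      · exact sigLE_trans hab hbc
      · exact hab.elim
  · rcases c with z | c | c
    · exact hbc.elim
    · exact hbc.elim
    · rcases a with x | a | a
      · obtain ⟨m, hm, he⟩ := hab
        exact ⟨m, hm, entryGE_mono hbc he⟩
      · exact sigLE_trans hab hbc
      · exact sigLE_trans hab hbc

instance : IsTrans LP lLE := ⟨fun _ _ _ => lLE_trans⟩

lemma eq_toX_or_eq_toS_of_lLE_toS {d : LP} {a : Sig} (h : lLE d (toS a)) :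
    (∃ x, d = toX x) ∨ ∃ b, d = toS b := by
  rcases d with x | b | b
  · exact Or.inl ⟨x, rfl⟩
  · exact Or.inr ⟨b, rfl⟩
  · exact h.elim

lemma exists_eq_toS_of_toS_lLE_of_lLE_toS {a b : Sig} {c : LP} (hb : lLE (toS b) c)
    (ha : lLE c (toS a)) : ∃ b', c = toS b' := by
  rcases c with x | c | c
  · exact hb.elim
  · exact ⟨c, rfl⟩
  · exact ha.elim

lemma DirectedSet.lLE_toX_top_of_forall_eq_toX {D : Set LP} (hD : DirectedSet lLE D)
    (hX : ∀ d ∈ D, ∃ x, d = toX x) {x₀ : XP} (hx₀ : toX x₀ ∈ D) :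
    ∀ d ∈ D, lLE d (toX (x₀.1, ⊤)) := by
  intro d hd
  obtain ⟨x, rfl⟩ := hX d hd
  obtain ⟨c, hc, hxc, hx₀c⟩ := hD.2 _ hd _ hx₀
  obtain ⟨y, rfl⟩ := hX c hc
  have hxy : xLE x y := hxc
  have hx₀y : xLE x₀ y := hx₀c
  exact ⟨hxy.1.trans hx₀y.1.symm, le_top⟩

lemma DirectedSet.exists_toS_mem {D : Set LP} {a : Sig} (hD : DirectedSet lLE D)
    (hs : IsSupOf lLE D (toS a)) : ∃ b, toS b ∈ D := by
  by_contra! hnone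
  have hX : ∀ d ∈ D, ∃ x, d = toX x := by
    intro d hd
    rcases eq_toX_or_eq_toS_of_lLE_toS (hs.1 d hd) with hx | ⟨b, rfl⟩
    · exact hx
    · exact (hnone b hd).elim
  obtain ⟨d₀, hd₀⟩ := hD.1
  obtain ⟨x₀, rfl⟩ := hX d₀ hd₀
  exact hs.2 _ (hD.lLE_toX_top_of_forall_eq_toX hX hd₀)

theorem stmt15 (D : Set LP) (s : LP) (hD : DirectedSet lLE D)
    (hs : IsSupOf lLE D s) (hmem : ∃ a : Sig, s = toS a) :
    DirectedSet lLE (D ∩ {u | ∃ a : Sig, u = toS a}) ∧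
    (∀ d ∈ D, ∃ e ∈ D ∩ {u | ∃ a : Sig, u = toS a}, lLE d e) ∧
    IsSupOf lLE (D ∩ {u | ∃ a : Sig, u = toS a}) s := by
  obtain ⟨a, rfl⟩ := hmem
  have hup : ∀ e ∈ D ∩ {u | ∃ a : Sig, u = toS a}, ∀ c ∈ D, lLE e c →
      c ∈ {u | ∃ a : Sig, u = toS a} := by
    rintro _ ⟨-, b, rfl⟩ c hc hbc
    exact exists_eq_toS_of_toS_lLE_of_lLE_toS hbc (hs.1 c hc)
  obtain ⟨b, hb⟩ := hD.exists_toS_mem hs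
  have hne : (D ∩ {u | ∃ a : Sig, u = toS a}).Nonempty := ⟨toS b, hb, b, rfl⟩
  have hcof := hD.cofinal_inter hup hne
  exact ⟨hD.inter hup hne, hcof, hs.of_cofinal Set.inter_subset_left hcof⟩
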